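/- Let φ > 0, let E be an exponentially distributed random variable with rate φ, and let B be a nonnegative random variable independent of E. Then for every real s ≥ 0 with s ≠ φ, E[exp(−s·max(B − E, 0))] = (φ·E[exp(−sB)] − s·E[exp(−φB)])/(φ − s). -/

import Mathlib

/-!
Conditioning on `B`, independence reduces the expectation to the integral of
`x ↦ φ e^{-φx} e^{-s(b-x)⁺}` over `(0, ∞)` for a fixed `b ≥ 0`. Splitting at `x = b`, the part on
`(0, b]` is an elementary exponential integral and the tail on `(b, ∞)` is `e^{-φb}`; the result is
affine in `e^{-sb}` and `e^{-φb}`, so integrating over `b` gives the formula.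
-/

open MeasureTheory ProbabilityTheory Real Set

lemma integral_exp_mul_of_ne_zero {c : ℝ} (hc : c ≠ 0) (a b : ℝ) :
    ∫ x in a..b, exp (c * x) = (exp (c * b) - exp (c * a)) / c := by
  rw [intervalIntegral.integral_comp_mul_left exp hc, integral_exp, smul_eq_mul, inv_mul_eq_div]

lemma integral_expMeasure {r : ℝ} (hr : 0 ≤ r) (g : ℝ → ℝ) :
    ∫ x, g x ∂expMeasure r = ∫ x in Ioi 0, r * exp (-(r * x)) * g x := by
  have hdensity : expMeasure r = volume.withDensity (exponentialPDF r) := rfl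
  rw [hdensity, integral_withDensity_eq_integral_toReal_smul (f := exponentialPDF r)
    (measurable_exponentialPDFReal r).ennreal_ofReal (.of_forall fun _ => ENNReal.ofReal_lt_top),
    ← integral_Ici_eq_integral_Ioi, ← integral_indicator measurableSet_Ici]
  congr 1 with x
  by_cases hx : 0 ≤ x <;> simp [exponentialPDF_eq, hx, hr, exp_nonneg]

section PosPartSub

variable {r s b : ℝ}

lemma exponentialDensity_mul_exp_eq_of_le {x : ℝ} (hx : x ≤ b) :
    r * exp (-(r * x)) * exp (-s * max (b - x) 0) = r * exp (-s * b) * exp ((s - r) * x) := by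
  rw [max_eq_left (sub_nonneg.mpr hx), mul_assoc, mul_assoc, ← exp_add, ← exp_add]
  ring_nf

lemma exponentialDensity_mul_exp_eq_of_lt {x : ℝ} (hx : b < x) :
    r * exp (-(r * x)) * exp (-s * max (b - x) 0) = r * exp (-r * x) := by
  rw [max_eq_right (by linarith), mul_zero, exp_zero, mul_one, neg_mul]

lemma setIntegral_Ioc_exponentialDensity_mul_exp (hsr : s ≠ r) (hb : 0 ≤ b) :
    ∫ x in Ioc 0 b, r * exp (-(r * x)) * exp (-s * max (b - x) 0) =
      r * (exp (-r * b) - exp (-s * b)) / (s - r) := by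
  rw [setIntegral_congr_fun measurableSet_Ioc fun x hx => exponentialDensity_mul_exp_eq_of_le hx.2,
    integral_const_mul, ← intervalIntegral.integral_of_le hb,
    integral_exp_mul_of_ne_zero (sub_ne_zero.mpr hsr), mul_zero, exp_zero]
  have hexp : exp (-s * b) * exp ((s - r) * b) = exp (-r * b) := by rw [← exp_add]; ring_nf
  rw [← hexp]
  ring

lemma setIntegral_Ioi_exponentialDensity_mul_exp (hr : 0 < r) :
    ∫ x in Ioi b, r * exp (-(r * x)) * exp (-s * max (b - x) 0) = exp (-r * b) := by
  rw [setIntegral_congr_fun measurableSet_Ioi fun x hx => exponentialDensity_mul_exp_eq_of_lt hx,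
    integral_const_mul, integral_exp_mul_Ioi (neg_neg_of_pos hr)]
  field_simp

lemma integral_exp_neg_mul_max_sub_expMeasure (hr : 0 < r) (hsr : s ≠ r) (hb : 0 ≤ b) :
    ∫ e, exp (-s * max (b - e) 0) ∂expMeasure r =
      (r * exp (-s * b) - s * exp (-r * b)) / (r - s) := by
  have hIoc : IntegrableOn (fun x => r * exp (-(r * x)) * exp (-s * max (b - x) 0)) (Ioc 0 b) :=
    (Continuous.integrableOn_Ioc (by fun_prop)).congr_fun
      (fun x hx => (exponentialDensity_mul_exp_eq_of_le hx.2).symm) measurableSet_Ioc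
  have hIoi : IntegrableOn (fun x => r * exp (-(r * x)) * exp (-s * max (b - x) 0)) (Ioi b) :=
    IntegrableOn.congr_fun ((exp_neg_integrableOn_Ioi b hr).const_mul r)
      (fun x hx => (exponentialDensity_mul_exp_eq_of_lt hx).symm) measurableSet_Ioi
  rw [integral_expMeasure hr.le, ← Ioc_union_Ioi_eq_Ioi hb,
    setIntegral_union (Ioc_disjoint_Ioi le_rfl) measurableSet_Ioi hIoc hIoi,
    setIntegral_Ioc_exponentialDensity_mul_exp hsr hb, setIntegral_Ioi_exponentialDensity_mul_exp hr]
  have : s - r ≠ 0 := sub_ne_zero.mpr hsr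
  have : r - s ≠ 0 := sub_ne_zero.mpr hsr.symm
  field_simp
  ring

end PosPartSub

lemma integrable_exp_neg_mul_of_nonneg {Ω : Type*} [MeasurableSpace Ω] {μ : Measure Ω}
    [IsFiniteMeasure μ] {X : Ω → ℝ} (hX : AEMeasurable X μ) (hX0 : ∀ᵐ ω ∂μ, 0 ≤ X ω) {c : ℝ}
    (hc : 0 ≤ c) : Integrable (fun ω => exp (-c * X ω)) μ :=
  Integrable.of_bound (by fun_prop) 1 <| hX0.mono fun ω hω => by
    rw [norm_of_nonneg (exp_nonneg _), exp_le_one_iff]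
    exact mul_nonpos_of_nonpos_of_nonneg (neg_nonpos.mpr hc) hω

lemma ProbabilityTheory.IndepFun.integral_comp_eq_integral_integral_map
    {Ω α β E : Type*} [MeasurableSpace Ω] [MeasurableSpace α] [MeasurableSpace β]
    [NormedAddCommGroup E] [NormedSpace ℝ E] [CompleteSpace E]
    {P : Measure Ω} [IsFiniteMeasure P] {X : Ω → α} {Y : Ω → β}
    (hXY : IndepFun X Y P) (hX : AEMeasurable X P) (hY : AEMeasurable Y P)
    {g : α × β → E} (hg : Integrable g ((P.map X).prod (P.map Y))) :
    ∫ ω, g (X ω, Y ω) ∂P = ∫ ω, ∫ y, g (X ω, y) ∂(P.map Y) ∂P := by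
  have hmap : P.map (fun ω => (X ω, Y ω)) = (P.map X).prod (P.map Y) :=
    (indepFun_iff_map_prod_eq_prod_map_map hX hY).mp hXY
  rw [← integral_map (hX.prodMk hY) (hmap ▸ hg.aestronglyMeasurable), hmap, integral_prod g hg,
    integral_map hX hg.integral_prod_left.aestronglyMeasurable]

/-- If `E` is exponentially distributed with rate `φ > 0` and `B ≥ 0` is independent of `E`,
then for `0 ≤ s`, `s ≠ φ`,
`E[exp(-s (B - E)⁺)] = (φ E[exp(-s B)] - s E[exp(-φ B)]) / (φ - s)`. -/
theorem laplace_transform_pos_part_sub_exponential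
    {Ω : Type*} [MeasurableSpace Ω] (P : Measure Ω) [IsProbabilityMeasure P]
    (φ : ℝ) (hφ : 0 < φ) (E B : Ω → ℝ)
    (hE : Measurable E) (hB : Measurable B)
    (hEexp : Measure.map E P = expMeasure φ)
    (hBnonneg : ∀ᵐ ω ∂P, 0 ≤ B ω)
    (hindep : IndepFun B E P)
    (s : ℝ) (hs : 0 ≤ s) (hsφ : s ≠ φ) :
    ∫ ω, exp (-s * max (B ω - E ω) 0) ∂P =
      (φ * ∫ ω, exp (-s * B ω) ∂P - s * ∫ ω, exp (-φ * B ω) ∂P) / (φ - s) := by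
  have hint : Integrable (fun p : ℝ × ℝ => exp (-s * max (p.1 - p.2) 0))
      ((P.map B).prod (P.map E)) :=
    integrable_exp_neg_mul_of_nonneg (by fun_prop) (.of_forall fun _ => le_max_right _ _) hs
  have hinner : ∀ᵐ ω ∂P, ∫ e, exp (-s * max (B ω - e) 0) ∂(P.map E) =
      (φ * exp (-s * B ω) - s * exp (-φ * B ω)) / (φ - s) :=
    hBnonneg.mono fun ω hω => hEexp ▸ integral_exp_neg_mul_max_sub_expMeasure hφ hsφ hω
  rw [hindep.integral_comp_eq_integral_integral_map hB.aemeasurable hE.aemeasurable hint,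
    integral_congr_ae hinner, integral_div, integral_sub, integral_const_mul, integral_const_mul]
  · exact (integrable_exp_neg_mul_of_nonneg hB.aemeasurable hBnonneg hs).const_mul φ
  · exact (integrable_exp_neg_mul_of_nonneg hB.aemeasurable hBnonneg hφ.le).const_mul s
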